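/- arXiv:1708.04235 — 2 statements merged into one kernel-verified Lean document; each statement's English description precedes it below -/
import Mathlib

section
/- Let f ∈ AC¹ and let x ∈ (−1,1) be rational and regular for a strictly increasing sequence (n_j) of positive integers. If O(f,x) ≠ 0 and E(f,x) ≠ 0 then liminf_{j→∞} n_j |B_{n_j}(f,x) − f(x)| > 0. -/
open Filter Set MeasureTheory

noncomputable section

/-- Equally spaced nodes `x_{k,n} = 2k/n - 1`. -/
def node (n k : ℕ) : ℝ := 2 * k / n - 1

/-- `x` is one of the nodes `x_{0,n}, …, x_{n,n}`. -/
def isNode (n : ℕ) (x : ℝ) : Prop := ∃ k ≤ n, x = node n k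

/-- Denominator of Berrut's interpolant. -/
def Dden (n : ℕ) (x : ℝ) : ℝ :=
  ∑ k ∈ Finset.range (n + 1), (-1 : ℝ) ^ k / (x - node n k)

/-- Numerator of Berrut's interpolant. -/
def Nnum (f : ℝ → ℝ) (n : ℕ) (x : ℝ) : ℝ :=
  ∑ k ∈ Finset.range (n + 1), (-1 : ℝ) ^ k * f (node n k) / (x - node n k)

open Classical in
/-- Berrut's barycentric interpolant. -/
def berrut (f : ℝ → ℝ) (n : ℕ) (x : ℝ) : ℝ :=
  if isNode n x then f x else Nnum f n x / Dden n x

/-- The odd bias function `O(f,x)`. -/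
def Ofun (f : ℝ → ℝ) (x : ℝ) : ℝ :=
  (f x - f 1) / (2 * (x - 1)) - (f x - f (-1)) / (2 * (x + 1))

/-- The even bias function `E(f,x)`. -/
def Efun (f : ℝ → ℝ) (x : ℝ) : ℝ :=
  (f 1 - f x) / (2 * (x - 1)) + (f (-1) - f x) / (2 * (x + 1))

/-- `f` is differentiable on `[-1,1]` with absolutely continuous derivative. -/
def AC1 (f : ℝ → ℝ) : Prop :=
  ∃ f' : ℝ → ℝ,
    (∀ x ∈ Set.Icc (-1 : ℝ) 1, HasDerivWithinAt f (f' x) (Set.Icc (-1 : ℝ) 1) x) ∧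
    ∃ g : ℝ → ℝ, IntervalIntegrable g volume (-1) 1 ∧
      ∀ x ∈ Set.Icc (-1 : ℝ) 1, f' x = f' (-1) + ∫ t in (-1 : ℝ)..x, g t

/-- `x` is regular for the sequence `n j`: eventually never a node. -/
def Regular (n : ℕ → ℕ) (x : ℝ) : Prop := ∃ j₀, ∀ j ≥ j₀, ¬ isNode (n j) x

/-- The function `A(x) = Σ (-1)^k (4k+2)/((2k+1)^2 - x)`. -/
def Afun (x : ℝ) : ℝ := ∑' k : ℕ, (-1 : ℝ) ^ k * (4 * k + 2) / ((2 * k + 1) ^ 2 - x)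

/-- `ι_n(x) = ⌊n(x+1)/2⌋`. -/
def iota (n : ℕ) (x : ℝ) : ℤ := ⌊(n : ℝ) * (x + 1) / 2⌋

/-- `ρ_n(x) = n(x - x_{ι_n(x),n}) - 1 = n(x+1) - 2 ι_n(x) - 1`. -/
def rho (n : ℕ) (x : ℝ) : ℝ := (n : ℝ) * (x + 1) - 2 * (iota n x : ℝ) - 1

open Classical in
/-- The de-biased numerator `Δ_n(f,x)`. -/
def Delta (f : ℝ → ℝ) (n : ℕ) (x : ℝ) : ℝ :=
  if isNode n x then 0 else
    (f (-1) - f x) / (2 * (x + 1)) + (-1 : ℝ) ^ n * (f 1 - f x) / (2 * (x - 1)) +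
      (1 / (n : ℝ)) * ∑ k ∈ Finset.Ioo 0 n, (-1 : ℝ) ^ k * (f (node n k) - f x) / (x - node n k)

end

/-!
Subtracting `f x * D_n(x)` from `N_n(f,x)` and summing by parts, the numerator of
`B_n(f,x) - f(x)` equals `E(f,x)` or `O(f,x)`, according to the parity of `n`, minus half of the
alternating sum `T_n` of consecutive differences of the slopes of `f` at `x` towards the nodes.
Writing each slope as an average of `f'` over a segment and each difference of values of `f'` as
an integral of `f''`, `T_n` becomes an average of alternating sums of integrals of `f'' ∈ L¹`
over adjacent intervals of length at most `2/n`; such sums tend to `0` (approximate `f''` in `L¹`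
by a uniformly continuous function, whose consecutive terms nearly cancel). On the other side,
`D_n(x)` splits into two alternating sums of decreasing terms, so `n/4 ≤ |D_n(x)|`, and
`|D_n(x)| ≤ 2qn` when `x = p/q`, because `x` then stays at distance at least `1/(qn)` from the
nodes. Hence `n |B_n(f,x) - f(x)|` is eventually at least `min (|O(f,x)|, |E(f,x)|) / (4q)`.
-/

open Topology

theorem node_zero (n : ℕ) : node n 0 = -1 := by simp [node]

theorem node_self {n : ℕ} (hn : n ≠ 0) : node n n = 1 := by
  simp only [node]; field_simp; norm_num

theorem node_add (n k j : ℕ) : node n (k + j) = node n k + 2 * j / n := by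
  simp only [node]; push_cast; ring

theorem node_mem_Icc {n k : ℕ} (hk : k ≤ n) : node n k ∈ Icc (-1 : ℝ) 1 := by
  rcases Nat.eq_zero_or_pos n with rfl | hn
  · simp [node]
  have hkn : (k : ℝ) ≤ n := by exact_mod_cast hk
  have h : 2 * (k : ℝ) / n ≤ 2 := by
    rw [div_le_iff₀ (by positivity)]; linarith
  constructor <;> simp only [node] <;> linarith [show 0 ≤ 2 * (k : ℝ) / n by positivity]

theorem exists_node_lt_lt {n : ℕ} (hn : 0 < n) {x : ℝ} (hx : x ∈ Ioo (-1 : ℝ) 1)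
    (hnode : ¬ isNode n x) : ∃ m < n, node n m < x ∧ x < node n (m + 1) := by
  have hn' : (0 : ℝ) < n := by exact_mod_cast hn
  set y := (n : ℝ) * (x + 1) / 2
  have node_eq (k : ℕ) : node n k = x + 2 * (k - y) / n := by
    simp only [node, y]; field_simp; ring
  have hm : (⌊y⌋₊ : ℝ) ≤ y := Nat.floor_le (by unfold y; nlinarith [hx.1])
  have hm' : y < ⌊y⌋₊ + 1 := Nat.lt_floor_add_one y
  have hmn : ⌊y⌋₊ < n := (Nat.floor_lt' hn.ne').2 (by unfold y; nlinarith [hx.2])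
  refine ⟨⌊y⌋₊, hmn, lt_of_le_of_ne ?_ fun h => hnode ⟨_, hmn.le, h.symm⟩, ?_⟩
  · rw [node_eq, add_le_iff_nonpos_right]
    exact div_nonpos_of_nonpos_of_nonneg (by linarith) hn'.le
  · rw [node_eq, lt_add_iff_pos_right]
    push_cast
    exact div_pos (by linarith) hn'

theorem one_div_le_abs_sub_node (r : ℚ) (n k : ℕ) (h : (r : ℝ) ≠ node n k) :
    1 / (r.den * n) ≤ |(r : ℝ) - node n k| := by
  rcases Nat.eq_zero_or_pos n with rfl | hn
  · simp
  have hpos : (0 : ℝ) < r.den * n := by positivity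
  set z : ℤ := (r.num + r.den) * n - 2 * k * r.den
  have hz : ((r : ℝ) - node n k) * (r.den * n) = z := by
    have : (r : ℝ) = r.num / r.den := Rat.cast_def r
    simp only [node, z, this]
    push_cast
    field_simp
    ring
  have hz0 : z ≠ 0 := by
    rintro hz0
    rw [hz0, Int.cast_zero, mul_eq_zero] at hz
    exact h (sub_eq_zero.1 (hz.resolve_right hpos.ne'))
  rw [div_le_iff₀ hpos, ← abs_of_pos hpos, ← abs_mul, hz]
  exact_mod_cast Int.one_le_abs hz0

theorem alternating_sum_range_succ' (a : ℕ → ℝ) (K : ℕ) :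
    ∑ k ∈ Finset.range (K + 1), (-1 : ℝ) ^ k * a k
      = a 0 - ∑ k ∈ Finset.range K, (-1 : ℝ) ^ k * a (k + 1) := by
  rw [Finset.sum_range_succ', sub_eq_neg_add, ← Finset.sum_neg_distrib]
  simp [pow_succ]

theorem Antitone.alternating_sum_mem_Icc {a : ℕ → ℝ} (ha : Antitone a) (h0 : 0 ≤ a)
    (K : ℕ) : ∑ k ∈ Finset.range K, (-1 : ℝ) ^ k * a k ∈ Icc 0 (a 0) := by
  induction K generalizing a with
  | zero => simpa using h0 0
  | succ K ih =>
    have := ih (a := fun k => a (k + 1)) (fun i j h => ha (by omega)) (fun k => h0 (k + 1))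
    simp only [zero_add, mem_Icc] at this
    rw [alternating_sum_range_succ']
    constructor <;> linarith [ha (zero_le_one' ℕ)]

theorem Antitone.sub_le_alternating_sum {a : ℕ → ℝ} (ha : Antitone a) (h0 : 0 ≤ a) (K : ℕ) :
    a 0 - a 1 ≤ ∑ k ∈ Finset.range (K + 1), (-1 : ℝ) ^ k * a k := by
  have hshift : Antitone fun k => a (k + 1) := fun i j h => ha (by omega)
  have := hshift.alternating_sum_mem_Icc (fun k => h0 (k + 1)) K
  rw [alternating_sum_range_succ']
  simp only [zero_add, mem_Icc] at this
  linarith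

theorem alternating_sum_range_succ_eq_ends_add_diffs (c : ℕ → ℝ) (n : ℕ) :
    ∑ k ∈ Finset.range (n + 1), (-1 : ℝ) ^ k * c k
      = (c 0 + (-1) ^ n * c n) / 2
        + (∑ k ∈ Finset.range n, (-1 : ℝ) ^ k * (c k - c (k + 1))) / 2 := by
  induction n with
  | zero => simp
  | succ n ih =>
    rw [Finset.sum_range_succ, ih, Finset.sum_range_succ, pow_succ]
    ring

theorem abs_alternating_sum_le {c : ℕ → ℝ} {d b : ℝ} (hd : ∀ k, |c k - c (k + 1)| ≤ d)
    (hb : ∀ k, |c k| ≤ b) (K : ℕ) :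
    |∑ k ∈ Finset.range K, (-1 : ℝ) ^ k * c k| ≤ K * d / 2 + b := by
  have hd0 : 0 ≤ d := (abs_nonneg _).trans (hd 0)
  induction K using Nat.twoStepInduction with
  | zero => simpa using (abs_nonneg _).trans (hb 0)
  | one => simpa using (hb 0).trans (by linarith)
  | more K ih _ =>
    have hpair : ∑ k ∈ Finset.range (K + 2), (-1 : ℝ) ^ k * c k
        = ∑ k ∈ Finset.range K, (-1 : ℝ) ^ k * c k + (-1) ^ K * (c K - c (K + 1)) := by
      rw [Finset.sum_range_succ, Finset.sum_range_succ, pow_succ]; ring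
    rw [hpair]
    calc _ ≤ |∑ k ∈ Finset.range K, (-1 : ℝ) ^ k * c k| + |(-1) ^ K * (c K - c (K + 1))| :=
          abs_add_le _ _
      _ ≤ K * d / 2 + b + d := by
          rw [abs_mul, abs_neg_one_pow, one_mul]; exact add_le_add ih (hd K)
      _ = ↑(K + 2) * d / 2 + b := by push_cast; ring

-- For `x` between `x_m` and `x_{m+1}`: two alternating sums of decreasing positive terms.
theorem Dden_eq {n m : ℕ} (hm : m < n) (x : ℝ) :
    Dden n x = (-1) ^ m *
      (∑ i ∈ Finset.range (m + 1), (-1 : ℝ) ^ i * (1 / (x - node n m + 2 * i / n))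
        + ∑ j ∈ Finset.range (n - m), (-1 : ℝ) ^ j * (1 / (node n (m + 1) - x + 2 * j / n))) := by
  have hsplit : n + 1 = (m + 1) + (n - m) := by omega
  rw [Dden, hsplit, Finset.sum_range_add, mul_add, Finset.mul_sum, Finset.mul_sum,
    ← Finset.sum_range_reflect]
  congr 1
  · refine Finset.sum_congr rfl fun i hi => ?_
    have hi : i ≤ m := Nat.lt_succ_iff.1 (Finset.mem_range.1 hi)
    have hnode : node n m = node n (m + 1 - 1 - i) + 2 * i / n := by
      rw [← node_add]; congr 1; omega
    have hpow : (-1 : ℝ) ^ m = (-1) ^ (m + 1 - 1 - i) * (-1) ^ i := by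
      rw [← pow_add]; congr 1; omega
    rw [hnode, hpow, sub_add_eq_sub_sub, sub_add_cancel]
    have : (-1 : ℝ) ^ i * (-1) ^ i = 1 := by rw [← mul_pow]; norm_num
    rw [mul_assoc, ← mul_assoc ((-1) ^ i), this, one_mul, mul_one_div]
  · refine Finset.sum_congr rfl fun j _ => ?_
    rw [node_add, pow_add, pow_succ,
      show x - (node n (m + 1) + 2 * j / n) = -(node n (m + 1) - x + 2 * j / n) by ring, div_neg]
    ring

theorem abs_Dden_bounds {n m : ℕ} (hm : m < n) {x : ℝ} (h1 : node n m < x)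
    (h2 : x < node n (m + 1)) :
    n / 4 ≤ |Dden n x| ∧ |Dden n x| ≤ 1 / (x - node n m) + 1 / (node n (m + 1) - x) := by
  have hn : (0 : ℝ) < n := by exact_mod_cast (Nat.zero_le m).trans_lt hm
  have hstep : node n (m + 1) = node n m + 2 / n := by rw [node_add]; simp
  have antitone {δ : ℝ} (hδ : 0 < δ) : Antitone fun i : ℕ => 1 / (δ + 2 * i / n) :=
    fun i j hij => one_div_le_one_div_of_le (by positivity) (by gcongr)
  have nonneg {δ : ℝ} (hδ : 0 < δ) : 0 ≤ fun i : ℕ => 1 / (δ + 2 * i / n) :=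
    fun i => by positivity
  have hδ₁ : 0 < x - node n m := sub_pos.2 h1
  have hδ₂ : 0 < node n (m + 1) - x := sub_pos.2 h2
  obtain ⟨hS₁0, hS₁⟩ := (antitone hδ₁).alternating_sum_mem_Icc (nonneg hδ₁) (m + 1)
  obtain ⟨hS₂0, hS₂⟩ := (antitone hδ₂).alternating_sum_mem_Icc (nonneg hδ₂) (n - m)
  have hS₁' := (antitone hδ₁).sub_le_alternating_sum (nonneg hδ₁) m
  simp only [CharP.cast_eq_zero, mul_zero, zero_div, add_zero, Nat.cast_one, mul_one]
    at hS₁ hS₂ hS₁'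
  rw [Dden_eq hm, abs_mul, abs_neg_one_pow, one_mul, abs_of_nonneg (add_nonneg hS₁0 hS₂0)]
  refine ⟨?_, add_le_add hS₁ hS₂⟩
  have hgap : n / 4 ≤ 1 / (x - node n m) - 1 / (x - node n m + 2 / n) := by
    have hδ' : x - node n m < 2 / n := by linarith
    have hnδ : n * (x - node n m) < 2 := by rwa [lt_div_iff₀ hn, mul_comm] at hδ'
    rw [div_sub_div _ _ hδ₁.ne' (by positivity), le_div_iff₀ (by positivity)]
    field_simp
    nlinarith [mul_pos hn hδ₁]
  linarith

theorem abs_Dden_bounds_of_rat {r : ℚ} (hr : (r : ℝ) ∈ Ioo (-1 : ℝ) 1) {n : ℕ} (hn : 0 < n)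
    (hnode : ¬ isNode n r) : n / 4 ≤ |Dden n r| ∧ |Dden n r| ≤ 2 * (r.den * n) := by
  obtain ⟨m, hm, h₁, h₂⟩ := exists_node_lt_lt hn hr hnode
  obtain ⟨hlow, hup⟩ := abs_Dden_bounds hm h₁ h₂
  have hinv {t : ℝ} (h : 1 / (r.den * n) ≤ t) : 1 / t ≤ r.den * n := by
    simpa using one_div_le_one_div_of_le (by positivity) h
  have hδ₁ := one_div_le_abs_sub_node r n m h₁.ne'
  have hδ₂ := one_div_le_abs_sub_node r n (m + 1) h₂.ne
  rw [abs_of_pos (sub_pos.2 h₁)] at hδ₁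
  rw [abs_of_neg (sub_neg.2 h₂), neg_sub] at hδ₂
  exact ⟨hlow, by linarith [hinv hδ₁, hinv hδ₂]⟩

noncomputable def altSlopeSum (f : ℝ → ℝ) (x : ℝ) (n : ℕ) : ℝ :=
  ∑ k ∈ Finset.range n, (-1) ^ k * (slope f x (node n k) - slope f x (node n (k + 1)))

theorem Nnum_sub_mul_Dden (f : ℝ → ℝ) (n : ℕ) (x : ℝ) :
    Nnum f n x - f x * Dden n x
      = -∑ k ∈ Finset.range (n + 1), (-1) ^ k * slope f x (node n k) := by
  rw [Nnum, Dden, Finset.mul_sum, ← Finset.sum_sub_distrib, ← Finset.sum_neg_distrib]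
  refine Finset.sum_congr rfl fun k _ => ?_
  rw [slope_def_field, ← neg_sub x, div_neg]
  ring

theorem Nnum_sub_mul_Dden_eq (f : ℝ → ℝ) {n : ℕ} (hn : 0 < n) (x : ℝ) :
    Nnum f n x - f x * Dden n x
      = (if Even n then Efun f x else Ofun f x) - altSlopeSum f x n / 2 := by
  have hs₁ : slope f x 1 = -((f 1 - f x) / (x - 1)) := by
    rw [slope_def_field, ← neg_sub x, div_neg]
  have hs₂ : slope f x (-1) = -((f (-1) - f x) / (x + 1)) := by
    rw [slope_def_field, show -1 - x = -(x + 1) by ring, div_neg]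
  rw [Nnum_sub_mul_Dden, alternating_sum_range_succ_eq_ends_add_diffs, altSlopeSum, node_zero,
    node_self hn.ne']
  rcases Nat.even_or_odd n with h | h
  · rw [if_pos h, h.neg_one_pow, Efun, div_mul_eq_div_div, div_mul_eq_div_div, hs₁, hs₂]
    ring
  · rw [if_neg (Nat.not_even_iff_odd.2 h), h.neg_one_pow, Ofun, div_mul_eq_div_div,
      div_mul_eq_div_div, hs₁, hs₂]
    ring

theorem abs_Nnum_sub_mul_Dden_bounds (f : ℝ → ℝ) {n : ℕ} (hn : 0 < n) {x : ℝ}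
    (hT : |altSlopeSum f x n| ≤ min |Ofun f x| |Efun f x|) :
    min |Ofun f x| |Efun f x| / 2 ≤ |Nnum f n x - f x * Dden n x| ∧
      |Nnum f n x - f x * Dden n x| ≤ 2 * (|Ofun f x| + |Efun f x|) := by
  have hB : min |Ofun f x| |Efun f x| ≤ |if Even n then Efun f x else Ofun f x| ∧
      |if Even n then Efun f x else Ofun f x| ≤ |Ofun f x| + |Efun f x| := by
    split_ifs
    · exact ⟨min_le_right _ _, le_add_of_nonneg_left (abs_nonneg _)⟩
    · exact ⟨min_le_left _ _, le_add_of_nonneg_right (abs_nonneg _)⟩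
  have hmin : min |Ofun f x| |Efun f x| ≤ |Ofun f x| + |Efun f x| :=
    (min_le_left _ _).trans (le_add_of_nonneg_right (abs_nonneg _))
  have hlow :=
    abs_sub_abs_le_abs_sub (if Even n then Efun f x else Ofun f x) (altSlopeSum f x n / 2)
  have hup := abs_sub (if Even n then Efun f x else Ofun f x) (altSlopeSum f x n / 2)
  rw [← Nnum_sub_mul_Dden_eq f hn, abs_div, abs_two] at hlow hup
  constructor <;> linarith

theorem abs_alternating_integral_le_integral_abs {g : ℝ → ℝ} (hg : Integrable g) {I : ℕ → ℝ}
    (hI : Monotone I) (K : ℕ) :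
    |∑ k ∈ Finset.range K, (-1 : ℝ) ^ k * ∫ t in I k..I (k + 1), g t| ≤ ∫ t, |g t| :=
  calc _ ≤ ∑ k ∈ Finset.range K, |(-1 : ℝ) ^ k * ∫ t in I k..I (k + 1), g t| :=
        Finset.abs_sum_le_sum_abs _ _
    _ ≤ ∑ k ∈ Finset.range K, ∫ t in I k..I (k + 1), |g t| :=
        Finset.sum_le_sum fun k _ => by
          rw [abs_mul, abs_neg_one_pow, one_mul]
          exact intervalIntegral.abs_integral_le_integral_abs (hI k.le_succ)
    _ = ∫ t in I 0..I K, |g t| :=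
        intervalIntegral.sum_integral_adjacent_intervals fun k _ => hg.abs.intervalIntegrable
    _ ≤ ∫ t, |g t| := by
        rw [intervalIntegral.integral_of_le (hI K.zero_le)]
        exact setIntegral_le_integral hg.abs (Eventually.of_forall fun t => abs_nonneg _)

theorem abs_alternating_integral_le_of_continuous {ψ : ℝ → ℝ} (hψ : Continuous ψ) {C η h : ℝ}
    (hC : ∀ t, |ψ t| ≤ C) (hη : ∀ t, |ψ t - ψ (t + h)| ≤ η) (h0 : 0 ≤ h) (a : ℝ) (K : ℕ) :
    |∑ k ∈ Finset.range K, (-1 : ℝ) ^ k * ∫ t in a + k * h..a + (k + 1) * h, ψ t|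
      ≤ K * (η * h) / 2 + C * h := by
  set I : ℕ → ℝ := fun k => a + k * h
  have hIh (k : ℕ) : I (k + 1) = I k + h := by simp only [I]; push_cast; ring
  have hlen {c : ℝ} (k : ℕ) : c * |I (k + 1) - I k| = c * h := by
    rw [hIh, add_sub_cancel_left, abs_of_nonneg h0]
  have hd (k : ℕ) : |(∫ t in I k..I (k + 1), ψ t) - ∫ t in I (k + 1)..I (k + 1 + 1), ψ t|
      ≤ η * h := by
    rw [hIh (k + 1), hIh k, ← intervalIntegral.integral_comp_add_right,
      ← intervalIntegral.integral_sub (hψ.intervalIntegrable _ _)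
        ((by fun_prop : Continuous fun t => ψ (t + h)).intervalIntegrable _ _),
      ← Real.norm_eq_abs, ← hIh]
    exact (intervalIntegral.norm_integral_le_of_norm_le_const fun t _ => hη t).trans (hlen k).le
  have hb (k : ℕ) : ‖∫ t in I k..I (k + 1), ψ t‖ ≤ C * h :=
    (intervalIntegral.norm_integral_le_of_norm_le_const fun t _ => hC t).trans (hlen k).le
  have := abs_alternating_sum_le hd hb K
  simp only [I] at this
  push_cast at this
  exact this

theorem MeasureTheory.Integrable.abs_alternating_integral_le {g : ℝ → ℝ} (hg : Integrable g)
    (L : ℝ) {ε : ℝ} (hε : 0 < ε) :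
    ∃ δ > 0, ∀ (a h : ℝ) (K : ℕ), 0 ≤ h → h < δ → K * h ≤ L →
      |∑ k ∈ Finset.range K, (-1 : ℝ) ^ k * ∫ t in a + k * h..a + (k + 1) * h, g t| ≤ ε := by
  have hε3 : 0 < ε / 3 := by positivity
  obtain ⟨ψ, hψc, hgψ, hψcont, hψint⟩ := hg.exists_hasCompactSupport_integral_sub_le hε3
  obtain ⟨C, hC⟩ := hψc.exists_bound_of_continuous hψcont
  obtain ⟨η, hη, hLη⟩ := exists_pos_mul_lt hε3 (L / 2)
  obtain ⟨δ₁, hδ₁, hψδ⟩ :=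
    Metric.uniformContinuous_iff.1 (hψc.uniformContinuous_of_continuous hψcont) η hη
  obtain ⟨δ₂, hδ₂, hCδ⟩ := exists_pos_mul_lt hε3 C
  refine ⟨min δ₁ δ₂, lt_min hδ₁ hδ₂, fun a h K h0 hδ hKL => ?_⟩
  have hψη (t : ℝ) : |ψ t - ψ (t + h)| ≤ η := by
    refine (hψδ ?_).le
    rw [Real.dist_eq, sub_add_cancel_left, abs_neg, abs_of_nonneg h0]
    exact hδ.trans_le (min_le_left _ _)
  have hψpart := abs_alternating_integral_le_of_continuous hψcont hC hψη h0 a K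
  have hrest := abs_alternating_integral_le_integral_abs (hg.sub hψint)
    (I := fun k : ℕ => a + k * h)
    (fun i j hij => add_le_add_right (mul_le_mul_of_nonneg_right (Nat.cast_le.2 hij) h0) a) K
  push_cast at hrest
  have hsplit : ∑ k ∈ Finset.range K, (-1 : ℝ) ^ k * ∫ t in a + k * h..a + (k + 1) * h, g t
      = ∑ k ∈ Finset.range K, (-1 : ℝ) ^ k * (∫ t in a + k * h..a + (k + 1) * h, ψ t)
        + ∑ k ∈ Finset.range K, (-1 : ℝ) ^ k * ∫ t in a + k * h..a + (k + 1) * h, (g - ψ) t := by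
    rw [← Finset.sum_add_distrib]
    refine Finset.sum_congr rfl fun k _ => ?_
    rw [← mul_add, ← intervalIntegral.integral_add hψint.intervalIntegrable
      (hg.sub hψint).intervalIntegrable]
    simp
  have hC0 : 0 ≤ C := (norm_nonneg _).trans (hC 0)
  have h1 : K * (η * h) / 2 ≤ L / 2 * η := by nlinarith
  have h2 : C * h ≤ C * δ₂ := mul_le_mul_of_nonneg_left (hδ.le.trans (min_le_right _ _)) hC0
  have h3 : ∫ t, |(g - ψ) t| ≤ ε / 3 := by simpa only [Pi.sub_apply, Real.norm_eq_abs] using hgψ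
  rw [hsplit]
  refine (abs_add_le _ _).trans ?_
  linarith

theorem slope_eq_integral_deriv {f f' : ℝ → ℝ} {a b x t : ℝ}
    (hderiv : ∀ y ∈ Ioo a b, HasDerivAt f (f' y) y) (hfc : ContinuousOn f (Icc a b))
    (hf'c : ContinuousOn f' (Icc a b)) (hx : x ∈ Ioo a b) (ht : t ∈ Icc a b) (hxt : t ≠ x) :
    slope f x t = ∫ u in (0 : ℝ)..1, f' (x + u * (t - x)) := by
  have hseg : MapsTo (fun u => x + u * (t - x)) (Icc 0 1) (Icc a b) := fun u hu => by
    obtain ⟨hx₁, hx₂⟩ := hx; obtain ⟨ht₁, ht₂⟩ := ht; obtain ⟨hu₀, hu₁⟩ := hu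
    constructor <;> nlinarith
  have hseg' : MapsTo (fun u => x + u * (t - x)) (Ioo 0 1) (Ioo a b) := fun u hu => by
    obtain ⟨hx₁, hx₂⟩ := hx; obtain ⟨ht₁, ht₂⟩ := ht; obtain ⟨hu₀, hu₁⟩ := hu
    constructor <;> nlinarith
  have hcont : Continuous fun u : ℝ => x + u * (t - x) := by fun_prop
  have hftc : ∫ u in (0 : ℝ)..1, (t - x) * f' (x + u * (t - x)) = f t - f x := by
    have := intervalIntegral.integral_eq_sub_of_hasDerivAt_of_le zero_le_one
      (hfc.comp hcont.continuousOn hseg)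
      (fun u hu => by
        simpa [mul_comm] using (hderiv _ (hseg' hu)).comp u
          (((hasDerivAt_id u).mul_const (t - x)).const_add x))
      ((hf'c.comp hcont.continuousOn hseg).const_smul (t - x)
        |>.intervalIntegrable_of_Icc zero_le_one)
    simpa using this
  rw [slope_def_field, ← hftc, intervalIntegral.integral_const_mul,
    mul_div_cancel_left₀ _ (sub_ne_zero.2 hxt)]

theorem AC1.exists_integrable {f : ℝ → ℝ} (hf : AC1 f) :
    ∃ f' E : ℝ → ℝ, Integrable E ∧
      (∀ y ∈ Icc (-1 : ℝ) 1, HasDerivWithinAt f (f' y) (Icc (-1) 1) y) ∧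
      ∀ a ∈ Icc (-1 : ℝ) 1, ∀ b ∈ Icc (-1 : ℝ) 1, f' b - f' a = ∫ t in a..b, E t := by
  obtain ⟨f', hderiv, g, hg, hrep⟩ := hf
  have hgi : IntegrableOn g (Icc (-1) 1) :=
    (intervalIntegrable_iff_integrableOn_Icc_of_le (by norm_num)).1 hg
  refine ⟨f', (Icc (-1) 1).indicator g, hgi.integrable_indicator measurableSet_Icc, hderiv,
    fun a ha b hb => ?_⟩
  have hsub {c d : ℝ} (hc : c ∈ Icc (-1 : ℝ) 1) (hd : d ∈ Icc (-1 : ℝ) 1) :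
      IntervalIntegrable g volume c d :=
    hg.mono_set (uIcc_subset_uIcc (by simpa using hc) (by simpa using hd))
  have hm : (-1 : ℝ) ∈ Icc (-1 : ℝ) 1 := by norm_num
  rw [hrep b hb, hrep a ha, add_sub_add_left_eq_sub,
    intervalIntegral.integral_interval_sub_left (hsub hm hb) (hsub hm ha)]
  refine intervalIntegral.integral_congr fun t ht => ?_
  exact (indicator_of_mem (uIcc_subset_Icc ha hb ht) g).symm

theorem altSlopeSum_eq_integral {f f' E : ℝ → ℝ} {x : ℝ} (hx : x ∈ Ioo (-1 : ℝ) 1)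
    (hderiv : ∀ y ∈ Ioo (-1 : ℝ) 1, HasDerivAt f (f' y) y) (hfc : ContinuousOn f (Icc (-1) 1))
    (hf'c : ContinuousOn f' (Icc (-1) 1))
    (hrep : ∀ a ∈ Icc (-1 : ℝ) 1, ∀ b ∈ Icc (-1 : ℝ) 1, f' b - f' a = ∫ t in a..b, E t)
    {n : ℕ} (hnode : ¬ isNode n x) :
    altSlopeSum f x n = -∫ u in (0 : ℝ)..1, ∑ k ∈ Finset.range n, (-1 : ℝ) ^ k *
      ∫ t in x - u * (1 + x) + k * (2 * u / n)..x - u * (1 + x) + (k + 1) * (2 * u / n), E t := by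
  set F : ℕ → ℝ → ℝ := fun k u => f' (x + u * (node n k - x))
  have hseg {k : ℕ} (hk : k ≤ n) :
      MapsTo (fun u => x + u * (node n k - x)) (Icc 0 1) (Icc (-1) 1) :=
    fun u hu => (convex_Icc (-1 : ℝ) 1).add_smul_sub_mem (Ioo_subset_Icc_self hx)
      (node_mem_Icc hk) hu
  have hslope {k : ℕ} (hk : k ≤ n) : slope f x (node n k) = ∫ u in (0 : ℝ)..1, F k u :=
    slope_eq_integral_deriv hderiv hfc hf'c hx (node_mem_Icc hk) fun h => hnode ⟨k, hk, h.symm⟩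
  have hint {k : ℕ} (hk : k ≤ n) : IntervalIntegrable (F k) volume 0 1 :=
    (hf'c.comp (by fun_prop) (hseg hk)).intervalIntegrable_of_Icc zero_le_one
  have hpoint (k : ℕ) (u : ℝ) : x + u * (node n k - x) = x - u * (1 + x) + k * (2 * u / n) := by
    simp only [node]; ring
  calc altSlopeSum f x n
      = ∑ k ∈ Finset.range n,
          (-1 : ℝ) ^ k * ((∫ u in (0 : ℝ)..1, F k u) - ∫ u in (0 : ℝ)..1, F (k + 1) u) :=
        Finset.sum_congr rfl fun k hk => by
          rw [hslope (Finset.mem_range.1 hk).le, hslope (Finset.mem_range.1 hk)]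
    _ = ∫ u in (0 : ℝ)..1, ∑ k ∈ Finset.range n, (-1 : ℝ) ^ k * (F k u - F (k + 1) u) := by
        rw [intervalIntegral.integral_finsetSum fun k hk =>
          ((hint (Finset.mem_range.1 hk).le).sub (hint (Finset.mem_range.1 hk))).const_mul _]
        refine Finset.sum_congr rfl fun k hk => ?_
        rw [intervalIntegral.integral_const_mul,
          intervalIntegral.integral_sub (hint (Finset.mem_range.1 hk).le)
            (hint (Finset.mem_range.1 hk))]
    _ = _ := by
        rw [← intervalIntegral.integral_neg]
        refine intervalIntegral.integral_congr fun u hu => ?_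
        rw [uIcc_of_le zero_le_one] at hu
        simp only [← Finset.sum_neg_distrib]
        refine Finset.sum_congr rfl fun k hk => ?_
        have hk := Finset.mem_range.1 hk
        rw [← neg_sub (F (k + 1) u)]
        simp only [F]
        rw [hrep (x + u * (node n k - x)) (hseg hk.le hu) (x + u * (node n (k + 1) - x))
          (hseg hk hu), hpoint, hpoint, mul_neg]
        push_cast
        rfl

-- `slope f x x = 0` is a junk value, hence the restriction to the `n` for which `x` is no node.
theorem tendsto_altSlopeSum {f f' E : ℝ → ℝ} {x : ℝ} (hx : x ∈ Ioo (-1 : ℝ) 1)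
    (hE : Integrable E) (hderiv : ∀ y ∈ Icc (-1 : ℝ) 1, HasDerivWithinAt f (f' y) (Icc (-1) 1) y)
    (hrep : ∀ a ∈ Icc (-1 : ℝ) 1, ∀ b ∈ Icc (-1 : ℝ) 1, f' b - f' a = ∫ t in a..b, E t) :
    Tendsto (altSlopeSum f x) (atTop ⊓ 𝓟 {n | ¬ isNode n x}) (𝓝 0) := by
  have hfc : ContinuousOn f (Icc (-1) 1) := fun y hy => (hderiv y hy).continuousWithinAt
  have hf'c : ContinuousOn f' (Icc (-1) 1) := by
    have hprim := intervalIntegral.continuous_primitive (fun _ _ => hE.intervalIntegrable) (-1 : ℝ)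
    refine ((continuous_const (y := f' (-1))).add hprim).continuousOn.congr fun y hy => ?_
    change f' y = f' (-1) + ∫ t in (-1 : ℝ)..y, E t
    rw [← hrep (-1) (by norm_num) y hy, add_sub_cancel]
  have hderiv' (y : ℝ) (hy : y ∈ Ioo (-1 : ℝ) 1) : HasDerivAt f (f' y) y :=
    (hderiv y (Ioo_subset_Icc_self hy)).hasDerivAt (Icc_mem_nhds hy.1 hy.2)
  rw [Metric.tendsto_nhds]
  intro ε hε
  obtain ⟨δ, hδ, hsmall⟩ := hE.abs_alternating_integral_le 2 (half_pos hε)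
  obtain ⟨N, hN⟩ := exists_nat_gt (2 / δ)
  rw [eventually_inf_principal]
  filter_upwards [eventually_ge_atTop N] with n hn hnode
  have hn' : 2 / δ < n := hN.trans_le (by exact_mod_cast hn)
  have hnpos : (0 : ℝ) < n := (by positivity : (0 : ℝ) < 2 / δ).trans hn'
  have hstep : 2 / (n : ℝ) < δ := by rwa [div_lt_comm₀ hnpos hδ]
  rw [altSlopeSum_eq_integral hx hderiv' hfc hf'c hrep hnode, dist_zero_right, norm_neg]
  refine (intervalIntegral.norm_integral_le_of_norm_le_const (C := ε / 2) fun u hu => ?_).trans_lt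
    (by norm_num; linarith)
  rw [uIoc_of_le zero_le_one] at hu
  have hh : 2 * u / n < δ :=
    (div_le_div_of_nonneg_right (by linarith [hu.2] : 2 * u ≤ 2) hnpos.le).trans_lt hstep
  refine hsmall _ _ n (div_nonneg (by linarith [hu.1]) hnpos.le) hh ?_
  rw [mul_div_cancel₀ _ hnpos.ne']
  linarith [hu.2]

theorem berrut_error_bounds {f : ℝ → ℝ} {r : ℚ} (hr : (r : ℝ) ∈ Ioo (-1 : ℝ) 1) {n : ℕ}
    (hn : 0 < n) (hnode : ¬ isNode n r)
    (hT : |altSlopeSum f r n| ≤ min |Ofun f r| |Efun f r|) :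
    min |Ofun f r| |Efun f r| / (4 * r.den) ≤ n * |berrut f n r - f r| ∧
      n * |berrut f n r - f r| ≤ 8 * (|Ofun f r| + |Efun f r|) := by
  have hn' : (0 : ℝ) < n := by exact_mod_cast hn
  obtain ⟨hDlow, hDup⟩ := abs_Dden_bounds_of_rat hr hn hnode
  obtain ⟨hSlow, hSup⟩ := abs_Nnum_sub_mul_Dden_bounds f hn hT
  have hDpos : 0 < |Dden n r| := lt_of_lt_of_le (by positivity) hDlow
  have herror : berrut f n r - f r = (Nnum f n r - f r * Dden n r) / Dden n r := by
    rw [berrut, if_neg hnode, sub_div, mul_div_cancel_right₀ _ (abs_pos.1 hDpos)]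
  rw [herror, abs_div]
  constructor
  · calc min |Ofun f r| |Efun f r| / (4 * r.den)
        = n * ((min |Ofun f r| |Efun f r| / 2) / (2 * (r.den * n))) := by field_simp; ring
      _ ≤ _ := by gcongr
  · calc _ ≤ n * ((2 * (|Ofun f r| + |Efun f r|)) / (n / 4)) := by gcongr
      _ = 8 * (|Ofun f r| + |Efun f r|) := by field_simp; ring

theorem statement7_general (f : ℝ → ℝ) (hf : AC1 f) (x : ℝ) (hx : x ∈ Set.Ioo (-1 : ℝ) 1)
    (hrat : ∃ r : ℚ, x = (r : ℝ)) (n : ℕ → ℕ) (hmono : StrictMono n)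
    (hreg : Regular n x)
    (hO : Ofun f x ≠ 0) (hE : Efun f x ≠ 0) :
    0 < Filter.liminf
      (fun j : ℕ => (n j : ℝ) * |berrut f (n j) x - f x|) Filter.atTop := by
  obtain ⟨r, rfl⟩ := hrat
  obtain ⟨f', E, hEi, hderiv, hrep⟩ := hf.exists_integrable
  have hc : 0 < min |Ofun f r| |Efun f r| := lt_min (abs_pos.2 hO) (abs_pos.2 hE)
  have hnonnode : ∀ᶠ j in atTop, ¬ isNode (n j) r := eventually_atTop.2 hreg
  have hT : ∀ᶠ j in atTop, |altSlopeSum f r (n j)| ≤ min |Ofun f r| |Efun f r| := by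
    have := (tendsto_altSlopeSum hx hEi hderiv hrep).comp
      (tendsto_inf.2 ⟨hmono.tendsto_atTop, tendsto_principal.2 hnonnode⟩)
    exact this.abs.eventually (eventually_le_nhds (by rwa [abs_zero]))
  have hbounds := (hT.and (hnonnode.and (hmono.tendsto_atTop.eventually_gt_atTop 0))).mono
    fun j ⟨hTj, hnode, hpos⟩ => berrut_error_bounds hx hpos hnode hTj
  exact lt_of_lt_of_le (by positivity) (le_liminf_of_le
    (isCoboundedUnder_ge_of_eventually_le atTop (hbounds.mono fun _ h => h.2))
    (hbounds.mono fun _ h => h.1))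

/-- for `f ∈ AC¹` and rational `x ∈ (-1,1)` regular for `(n_j)`, if
`O(f,x) ≠ 0` and `E(f,x) ≠ 0` then `liminf n_j |B_{n_j}(f,x) - f(x)| > 0`. -/
theorem statement7 (f : ℝ → ℝ) (hf : AC1 f) (x : ℝ) (hx : x ∈ Set.Ioo (-1 : ℝ) 1)
    (hrat : ∃ r : ℚ, x = (r : ℝ)) (n : ℕ → ℕ) (hmono : StrictMono n)
    (hpos : ∀ j, 0 < n j) (hreg : Regular n x)
    (hO : Ofun f x ≠ 0) (hE : Efun f x ≠ 0) :
    0 < Filter.liminf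
      (fun j : ℕ => (n j : ℝ) * |berrut f (n j) x - f x|) Filter.atTop :=
  statement7_general f hf x hx hrat n hmono hreg hO hE
end

section
/- Let a, b ∈ ℝ with a < b, and let f : [a,b] → ℝ be continuous on [a,b] and differentiable on (a,b). If c and ξ_c satisfy a < ξ_c < c < b and f'(ξ_c) = (f(c) − f(a))/(c − a), then there exists ξ_b ∈ [ξ_c, b) such that f'(ξ_b) = (f(b) − f(a))/(b − a). -/
open Filter Set MeasureTheory

/-!
The slope of `f` over `[a, b]` is a convex combination of its slopes over `[a, c]` and `[c, b]`,
so it lies between `f' ξc` and `f' ξ`, where `ξ ∈ (c, b)` is a mean-value point for `[c, b]`.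
By Darboux's theorem the image of `[ξc, b)` under `f'` is an interval, so it contains that slope.
-/

theorem slope_mem_uIcc_slope_slope (f : ℝ → ℝ) {a b c : ℝ} (hac : a ≤ c) (hcb : c ≤ b) :
    slope f a b ∈ uIcc (slope f a c) (slope f c b) := by
  rcases eq_or_ne a b with rfl | hab
  · obtain rfl : a = c := le_antisymm hac hcb
    simp
  rw [← lineMap_slope_slope_sub_div_sub f a c b hab, ← segment_eq_uIcc]
  have hba : 0 < b - a := sub_pos.2 ((hac.trans hcb).lt_of_ne hab)
  refine lineMap_mem_segment ℝ _ _ ⟨div_nonneg (sub_nonneg.2 hcb) hba.le, ?_⟩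
  rw [div_le_one hba]
  linarith

theorem statement18_general (a b c ξc : ℝ) (f f' : ℝ → ℝ)
    (hcont : ContinuousOn f (Set.Icc a b))
    (hderiv : ∀ x ∈ Set.Ioo a b, HasDerivAt f (f' x) x)
    (h1 : a < ξc) (h2 : ξc < c) (h3 : c < b)
    (hξc : f' ξc = (f c - f a) / (c - a)) :
    ∃ ξb ∈ Set.Ico ξc b, f' ξb = (f b - f a) / (b - a) := by
  have hIco : Ico ξc b ⊆ Ioo a b := Ico_subset_Ioo_left h1
  obtain ⟨ξ, hξ, hξcb⟩ := exists_hasDerivAt_eq_slope f f' h3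
    (hcont.mono (Icc_subset_Icc_left (h1.trans h2).le))
    (fun x hx ↦ hderiv x ⟨(h1.trans h2).trans hx.1, hx.2⟩)
  have hdarboux : OrdConnected (f' '' Ico ξc b) := ordConnected_Ico.image_hasDerivWithinAt
    fun x hx ↦ (hderiv x (hIco hx)).hasDerivWithinAt
  have hslope : slope f a b ∈ uIcc (f' ξc) (f' ξ) := by
    rw [hξc, hξcb, ← slope_def_field, ← slope_def_field]
    exact slope_mem_uIcc_slope_slope f (h1.trans h2).le h3.le
  rw [← slope_def_field]
  exact hdarboux.uIcc_subset (mem_image_of_mem f' ⟨le_rfl, h2.trans h3⟩)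
    (mem_image_of_mem f' ⟨(h2.trans hξ.1).le, hξ.2⟩) hslope

/-- a monotone Mean Value Theorem. -/
theorem statement18 (a b c ξc : ℝ) (f f' : ℝ → ℝ) (hab : a < b)
    (hcont : ContinuousOn f (Set.Icc a b))
    (hderiv : ∀ x ∈ Set.Ioo a b, HasDerivAt f (f' x) x)
    (h1 : a < ξc) (h2 : ξc < c) (h3 : c < b)
    (hξc : f' ξc = (f c - f a) / (c - a)) :
    ∃ ξb ∈ Set.Ico ξc b, f' ξb = (f b - f a) / (b - a) :=
  statement18_general a b c ξc f f' hcont hderiv h1 h2 h3 hξc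
end
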